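/- arXiv:1511.01368 — 6 statements merged into one kernel-verified Lean document; each statement's English description precedes it below -/
import Mathlib

section
/- Let A(X,Y) and B(Y,Z) be Boolean formulas over pairwise disjoint variable sets X, Y, Z with A ∧ B unsatisfiable. A formula H(Y) depending only on Y is an interpolant of the implication A → ¬B (i.e., A → H and H → ¬B both hold) if and only if A → H holds and ∃W[A ∧ B] ≡ H ∧ ∃W[B], where W = X ∪ Z. -/
/-- With A ∧ B unsatisfiable, H(Y) is an interpolant of A → ¬B iff
A → H and ∃W[A ∧ B] ≡ H ∧ ∃W[B], where W = X ∪ Z. -/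
theorem stmt_2 {X Y Z : Type}
    (A : (X → Bool) → (Y → Bool) → Prop) (B : (Y → Bool) → (Z → Bool) → Prop)
    (H : (Y → Bool) → Prop)
    (hunsat : ¬ ∃ x y z, A x y ∧ B y z) :
    ((∀ x y, A x y → H y) ∧ (∀ y z, H y → ¬ B y z)) ↔
    ((∀ x y, A x y → H y) ∧
     (∀ y, (∃ x z, A x y ∧ B y z) ↔ (H y ∧ ∃ (x : X → Bool) (z : Z → Bool), B y z))) := by
  constructor
  · rintro ⟨h1, h2⟩
    refine ⟨h1, fun y => ⟨fun ⟨x, z, hA, hB⟩ => absurd ⟨x, y, z, hA, hB⟩ hunsat,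
      fun ⟨hH, x, z, hB⟩ => absurd hB (h2 y z hH)⟩⟩
  · rintro ⟨h1, h2⟩
    refine ⟨h1, fun y z hH hB => ?_⟩
    exact hunsat (((h2 y).mpr ⟨hH, fun _ => true, z, hB⟩).imp (fun x h => ⟨y, h⟩))
end

section
/- Let A(X,Y) and B(Y,Z) be Boolean formulas over pairwise disjoint variable sets X, Y, Z with A ∧ B satisfiable. Let H(Y) satisfy ∃W[A ∧ B] ≡ H ∧ ∃W[B] with W = X ∪ Z. If assignments y to Y and z to Z are such that (y,z) satisfies H ∧ B, then (y,z) can be extended by an assignment x to X such that (x,y,z) satisfies A ∧ B. -/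
/-- With A ∧ B satisfiable and ∃W[A ∧ B] ≡ H ∧ ∃W[B] (W = X ∪ Z),
any (y,z) satisfying H ∧ B extends by some x so that (x,y,z) satisfies A ∧ B. -/
theorem stmt_3 {X Y Z : Type}
    (A : (X → Bool) → (Y → Bool) → Prop) (B : (Y → Bool) → (Z → Bool) → Prop)
    (H : (Y → Bool) → Prop)
    (hsat : ∃ x y z, A x y ∧ B y z)
    (hpqe : ∀ y, (∃ x z, A x y ∧ B y z) ↔ (H y ∧ ∃ (x : X → Bool) (z : Z → Bool), B y z)) :
    ∀ y z, H y → B y z → ∃ x, A x y ∧ B y z := by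
  intro y z hH hB
  obtain ⟨x0, -, -⟩ := hsat
  obtain ⟨x, z', hA, -⟩ := (hpqe y).mpr ⟨hH, x0, z, hB⟩
  exact ⟨x, hA, hB⟩
end

section
/- With G = EQ(X',X'') ∧ F_M ∧ F_L and cut variable set C, let W consist of all variables of G except those of C, and let H_cut(C) be a formula depending only on C. Suppose H_cut satisfies ∃W'[EQ ∧ F_M] ≡ H_cut ∧ ∃W'[F_M], where W' is the set of variables of EQ ∧ F_M minus those of C. Then: (a) G → H_cut, and (b) for every assignment q to C that can be extended to satisfy F_M ∧ F_L but cannot be extended to satisfy G, H_cut(q) = 0. -/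
/-- Proposition 2: If H_cut (over cut C only) satisfies
∃W'[EQ ∧ F_M] ≡ H_cut ∧ ∃W'[F_M], then H_cut is a boundary formula:
(a) G → H_cut and (b) H_cut(q) = 0 for every cut assignment q extendable to satisfy
F_M ∧ F_L but not G = EQ ∧ F_M ∧ F_L. -/
theorem stmt_5 {X U C V : Type}
    (FM : (X → Bool) → (X → Bool) → (U → Bool) → (C → Bool) → Prop)
    (FL : (C → Bool) → (V → Bool) → Prop)
    (Hcut : (C → Bool) → Prop)
    -- circuit semantics: every input assignment extends uniquely to satisfy F_M
    (hFM : ∀ x' x'', ∃! p : (U → Bool) × (C → Bool), FM x' x'' p.1 p.2)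
    -- execution-trace extendability: every cut assignment extends to satisfy F_L
    (hFL : ∀ c, ∃ v, FL c v)
    (hpqe : ∀ c, (∃ x' x'' u, x' = x'' ∧ FM x' x'' u c) ↔
      (Hcut c ∧ ∃ x' x'' u, FM x' x'' u c)) :
    (∀ x' x'' u c v, x' = x'' → FM x' x'' u c → FL c v → Hcut c) ∧
    (∀ q, (∃ x' x'' u v, FM x' x'' u q ∧ FL q v) →
      ¬ (∃ x' x'' u v, x' = x'' ∧ FM x' x'' u q ∧ FL q v) → ¬ Hcut q) := by
  constructor
  · rintro x' x'' u c v heq hFMsat hFLsat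
    exact ((hpqe c).1 ⟨x', x'', u, heq, hFMsat⟩).1
  · rintro q ⟨x', x'', u, v, hFMsat, hFLsat⟩ hnG hH
    obtain ⟨a, b, w, heq, hFMab⟩ := (hpqe q).2 ⟨hH, x', x'', u, hFMsat⟩
    obtain ⟨v2, hv2⟩ := hFL q
    exact hnG ⟨a, b, w, v2, heq, hFMab, hv2⟩
end

section
/- Let H_0, H_{i-1}, H_i be Boolean formulas and F_{M_{i-1}} ⊆ F_{M_i} CNF formulas, with variable sets arranged so that: W_i is the set of variables of F_{M_i} minus the variables of Cut_i; W_{i-1} is the set of variables of F_{M_{i-1}} minus Cut_{i-1}; the clause set F_{i-1,i} = F_{M_i} \ F_{M_{i-1}} contains no variables of W_{i-1}; H_{i-1} depends only on Cut_{i-1}; and H_0 depends only on input variables, all of which are in W_{i-1} and in W_i. Suppose (1) ∃W_{i-1}[H_0 ∧ F_{M_{i-1}}] ≡ H_{i-1} ∧ ∃W_{i-1}[F_{M_{i-1}}], and (2) ∃W_i[H_{i-1} ∧ F_{M_i}] ≡ H_i ∧ ∃W_i[F_{M_i}]. Then ∃W_i[H_0 ∧ F_{M_i}] ≡ H_i ∧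 ∃W_i[F_{M_i}]. -/
/-- Proposition 5: Variables of W_{i-1} are modeled by type α, variables
of W_{i-1,i} = W_i \ W_{i-1} (including Cut_{i-1}) by type δ, and Cut_i by type γ.
F_{M_{i-1}} depends on W_{i-1} ∪ Cut_{i-1}; F_{i-1,i} = F_{M_i} \ F_{M_{i-1}} does not
depend on W_{i-1}; H_{i-1} depends only on Cut_{i-1} ⊆ δ; H_0 only on input variables
(in W_{i-1}); H_i only on Cut_i. If ∃W_{i-1}[H_0 ∧ F_{M_{i-1}}] ≡ H_{i-1} ∧
∃W_{i-1}[F_{M_{i-1}}] and ∃W_i[H_{i-1} ∧ F_{M_i}] ≡ H_i ∧ ∃W_i[F_{M_i}], then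
∃W_i[H_0 ∧ F_{M_i}] ≡ H_i ∧ ∃W_i[F_{M_i}]. -/
theorem stmt_10 {α δ γ : Type}
    (H0 : (α → Bool) → Prop)
    (Fprev : (α → Bool) → (δ → Bool) → Prop)
    (Fdiff : (δ → Bool) → (γ → Bool) → Prop)
    (Hprev : (δ → Bool) → Prop)
    (Hi : (γ → Bool) → Prop)
    (h1 : ∀ d, (∃ a, H0 a ∧ Fprev a d) ↔ (Hprev d ∧ ∃ a, Fprev a d))
    (h2 : ∀ c, (∃ a d, Hprev d ∧ (Fprev a d ∧ Fdiff d c)) ↔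
      (Hi c ∧ ∃ a d, Fprev a d ∧ Fdiff d c)) :
    ∀ c, (∃ a d, H0 a ∧ (Fprev a d ∧ Fdiff d c)) ↔
      (Hi c ∧ ∃ a d, Fprev a d ∧ Fdiff d c) := by
  intro c
  constructor
  · rintro ⟨a, d, hH0, hF, hD⟩
    have hp : Hprev d := ((h1 d).mp ⟨a, hH0, hF⟩).1
    exact (h2 c).mp ⟨a, d, hp, hF, hD⟩
  · rintro ⟨hHi, hex⟩
    obtain ⟨a, d, hp, hF, hD⟩ := (h2 c).mpr ⟨hHi, hex⟩
    obtain ⟨a', hH0, hF'⟩ := (h1 d).mpr ⟨hp, a, hF⟩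
    exact ⟨a', d, hH0, hF', hD⟩
end

section
/- Suppose subcircuits M' and M'' (the parts of N' and N'' below a cut) are functionally equivalent: for every input x, the output of M' on x equals the output of M'' on x under a fixed bijection Cut' ↔ Cut''. Then the formula EQ(Cut', Cut''), asserting equality of corresponding cut variables, is a boundary formula: (a) it is implied by EQ(X',X'') ∧ F_{N'} ∧ F_{N''}, and (b) it is falsified by every cut assignment that can be produced by M' and M'' under some pair of (possibly different) inputs but cannot be produced under any equal pair of inputs. Moreover EQ(Cut',Cut'') is expressible as a CNF with 2p two-literal clauses, where p = |Cut'| = |Cut''|. -/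
/-- A clause over variables `α` is a finite set of literals `(v, b)`, where the literal
is true under assignment `q` iff `q v = b`. A CNF is a finite set of clauses. -/
def cnfEval {α : Type} [DecidableEq α]
    (Φ : Finset (Finset (α × Bool))) (q : α → Bool) : Prop :=
  ∀ cl ∈ Φ, ∃ l ∈ cl, q l.1 = l.2

/-- Corollary 2: If subcircuits M' and M'' below a cut are functionally
equivalent (under a fixed bijection of their cut variables, modeled by a common index
type C), then EQ(Cut',Cut'') is a boundary formula: (a) it holds on every cut assignment
produced under equal inputs, and (b) it is falsified by every cut assignment producible
under some pair of inputs but not under any equal pair. Moreover it is expressible as a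
CNF with 2p two-literal clauses, p = |C|. -/
theorem stmt_12 {X C : Type} [DecidableEq C] [Fintype C]
    (M' M'' : (X → Bool) → (C → Bool))
    (hequiv : ∀ x, M' x = M'' x) :
    (∀ x, ∀ v, M' x v = M'' x v) ∧
    (∀ q' q'' : C → Bool,
      (∃ x' x'', M' x' = q' ∧ M'' x'' = q'') →
      ¬ (∃ x, M' x = q' ∧ M'' x = q'') → ¬ (q' = q'')) ∧
    (∃ Φ : Finset (Finset ((C ⊕ C) × Bool)),
      Φ.card = 2 * Fintype.card C ∧
      (∀ cl ∈ Φ, cl.card = 2) ∧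
      (∀ q' q'' : C → Bool, cnfEval Φ (Sum.elim q' q'') ↔ q' = q'')) := by
  refine ⟨fun x v => by rw [hequiv], ?_, ?_⟩
  · rintro q' q'' ⟨x', x'', h1, h2⟩ hno heq
    exact hno ⟨x', h1, by rw [← hequiv, h1, heq]⟩
  · set f : C × Bool → Finset ((C ⊕ C) × Bool) :=
      fun p => {(Sum.inl p.1, p.2), (Sum.inr p.1, !p.2)} with hf
    have hfinj : Function.Injective f := by
      intro a b hab
      have : ((Sum.inl a.1 : C ⊕ C), a.2) ∈ f b := by
        rw [← hab]; simp [hf]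
      simp only [hf, Finset.mem_insert, Finset.mem_singleton, Prod.mk.injEq] at this
      rcases this with ⟨h1, h2⟩ | ⟨h1, _⟩
      · exact Prod.ext (Sum.inl_injective h1) h2
      · exact absurd h1 (by simp)
    refine ⟨Finset.univ.image f, ?_, ?_, ?_⟩
    · rw [Finset.card_image_of_injective _ hfinj, Finset.card_univ, Fintype.card_prod,
        Fintype.card_bool, mul_comm]
    · intro cl hcl
      simp only [Finset.mem_image] at hcl
      obtain ⟨p, _, rfl⟩ := hcl
      rw [hf]
      exact Finset.card_pair (by simp)
    · intro q' q''
      constructor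
      · intro h
        funext v
        have := h (f (v, !(q' v))) (Finset.mem_image_of_mem _ (Finset.mem_univ _))
        simp only [hf, Finset.mem_insert, Finset.mem_singleton] at this
        obtain ⟨l, hl, hval⟩ := this
        rcases hl with rfl | rfl
        · simp at hval
        · simpa using hval.symm
      · rintro rfl cl hcl
        simp only [Finset.mem_image] at hcl
        obtain ⟨⟨v, b⟩, _, rfl⟩ := hcl
        by_cases hb : q' v = b
        · exact ⟨(Sum.inl v, b), by simp [hf], by simpa⟩
        · exact ⟨(Sum.inr v, !b), by simp [hf], by simp only [Sum.elim_inr]; revert hb; cases q' v <;> cases b <;> simp⟩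
end

section
/- Let A(X,Y), B(Y,Z) be Boolean formulas over pairwise disjoint variable sets, W = X ∪ Z, and H(Y) a formula with A → H and ∃W[A ∧ B] ≡ H ∧ ∃W[B]. If A ∧ B is satisfiable, then H ∧ B is satisfiable (so the 'broken implication' A ↛ ¬B yields H ↛ ¬B); conversely if H ∧ B is satisfiable then A ∧ B is satisfiable. -/
/-- With A → H and ∃W[A ∧ B] ≡ H ∧ ∃W[B] (W = X ∪ Z), A ∧ B is
satisfiable iff H ∧ B is satisfiable (interpolation of a broken implication). -/
theorem stmt_13 {X Y Z : Type}
    (A : (X → Bool) → (Y → Bool) → Prop) (B : (Y → Bool) → (Z → Bool) → Prop)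
    (H : (Y → Bool) → Prop)
    (hAH : ∀ x y, A x y → H y)
    (hpqe : ∀ y, (∃ x z, A x y ∧ B y z) ↔ (H y ∧ ∃ (x : X → Bool) (z : Z → Bool), B y z)) :
    (∃ x y z, A x y ∧ B y z) ↔ (∃ y z, H y ∧ B y z) := by
  constructor
  · rintro ⟨x, y, z, hA, hB⟩
    exact ⟨y, z, hAH x y hA, hB⟩
  · rintro ⟨y, z, hH, hB⟩
    obtain ⟨x, z', hA, hB'⟩ := (hpqe y).mpr ⟨hH, fun _ => true, z, hB⟩
    exact ⟨x, y, z', hA, hB'⟩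
end
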